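/- For rooted binary trees T_a, T_b on k labeled tips, if for every pair of tips i,j the number of edges from the root to the most recent common ancestor of i and j is the same in T_a as in T_b, then T_a and T_b have the same topology (i.e., they induce the same set of tip partitions by internal edges). -/

import Mathlib

/-!
Every clade of a tree is the tip set below an ancestor `v` of some tip `i`. If `v` lies at
depth `d`, this clade is exactly `{j | d ≤ m i j}`, because the most recent common ancestor
of `i` and `j` lies below `v` iff `j` does. Hence the clades are determined by `m`.
-/

/-- Rooted binary trees with tips labeled by `Fin k`; each internal node
stores the branch lengths of the edges to its two children. -/
inductive RTree (k : ℕ) : Type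
  | leaf : Fin k → RTree k
  | node : ℝ → RTree k → ℝ → RTree k → RTree k

namespace RTree

variable {k : ℕ}

/-- The list of tip labels of a tree. -/
def tipList : RTree k → List (Fin k)
  | leaf i => [i]
  | node _ l _ r => l.tipList ++ r.tipList

/-- The set of tip labels of a tree. -/
def tips (T : RTree k) : Finset (Fin k) := T.tipList.toFinset

/-- `T` is a phylogenetic tree on `k` labeled tips: each label occurs exactly once. -/
def IsPhylo (T : RTree k) : Prop := T.tipList.Nodup ∧ ∀ i : Fin k, i ∈ T.tipList

/-- All branch lengths are positive. -/
def PosLens : RTree k → Prop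
  | leaf _ => True
  | node a l b r => 0 < a ∧ 0 < b ∧ PosLens l ∧ PosLens r

/-- All branch lengths are nonnegative. -/
def NonnegLens : RTree k → Prop
  | leaf _ => True
  | node a l b r => 0 ≤ a ∧ 0 ≤ b ∧ NonnegLens l ∧ NonnegLens r

/-- All branch lengths are at most `ε`. -/
def LensLE (ε : ℝ) : RTree k → Prop
  | leaf _ => True
  | node a l b r => a ≤ ε ∧ b ≤ ε ∧ LensLE ε l ∧ LensLE ε r

/-- All branch lengths are equal to `1`. -/
def UnitLens : RTree k → Prop
  | leaf _ => True
  | node a l b r => a = 1 ∧ b = 1 ∧ UnitLens l ∧ UnitLens r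

/-- `m T i j`: the number of edges on the path from the root to the
most recent common ancestor of tips `i` and `j`. -/
def m : RTree k → Fin k → Fin k → ℕ
  | leaf _, _, _ => 0
  | node _ l _ r, i, j =>
      if i ∈ l.tips ∧ j ∈ l.tips then m l i j + 1
      else if i ∈ r.tips ∧ j ∈ r.tips then m r i j + 1
      else 0

/-- `Mlen T i j`: the sum of branch lengths on the path from the root to the
most recent common ancestor of tips `i` and `j`. -/
def Mlen : RTree k → Fin k → Fin k → ℝ
  | leaf _, _, _ => 0
  | node a l b r, i, j =>
      if i ∈ l.tips ∧ j ∈ l.tips then Mlen l i j + a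
      else if i ∈ r.tips ∧ j ∈ r.tips then Mlen r i j + b
      else 0

/-- Whether the tree is a single leaf. -/
def isLeaf : RTree k → Bool
  | leaf _ => true
  | node _ _ _ _ => false

/-- `pend T i`: the length of the pendant edge leading to tip `i`. -/
def pend : RTree k → Fin k → ℝ
  | leaf _, _ => 0
  | node a l b r, i =>
      if i ∈ l.tips then (if l.isLeaf then a else pend l i)
      else if i ∈ r.tips then (if r.isLeaf then b else pend r i)
      else 0

/-- The set of clades (tip sets of rooted subtrees) of a tree.  Two rooted
trees have the same topology iff they have the same set of clades, i.e. their
internal edges induce the same tip partitions. -/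
def clades : RTree k → Set (Finset (Fin k))
  | leaf i => {{i}}
  | node a l b r => insert (node a l b r).tips (clades l ∪ clades r)

/-- Equality of rooted trees: same topology (ignoring the left/right order of
children) and equal corresponding branch lengths. -/
inductive TreeEq : RTree k → RTree k → Prop
  | leaf (i : Fin k) : TreeEq (.leaf i) (.leaf i)
  | node {l l' r r' : RTree k} (a b : ℝ) :
      TreeEq l l' → TreeEq r r' → TreeEq (.node a l b r) (.node a l' b r')
  | swap {l l' r r' : RTree k} (a b : ℝ) :
      TreeEq l l' → TreeEq r r' → TreeEq (.node a l b r) (.node b r' a l')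

/-- `S` is the rooted subtree of `T` hanging at a node at edge-depth `d`. -/
inductive SubtreeAt : RTree k → ℕ → RTree k → Prop
  | refl (T : RTree k) : SubtreeAt T 0 T
  | left {l S : RTree k} {d : ℕ} (a b : ℝ) (r : RTree k) :
      SubtreeAt l d S → SubtreeAt (.node a l b r) (d + 1) S
  | right {r S : RTree k} {d : ℕ} (a b : ℝ) (l : RTree k) :
      SubtreeAt r d S → SubtreeAt (.node a l b r) (d + 1) S

/-- Relabel the tips of a tree by a permutation. -/
def relabel (σ : Equiv.Perm (Fin k)) : RTree k → RTree k
  | leaf i => leaf (σ i)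
  | node a l b r => node a (relabel σ l) b (relabel σ r)

/-- The set of unordered pairs of distinct tips, represented by ordered pairs `(i, j)` with `i < j`. -/
def tipPairs (k : ℕ) : Finset (Fin k × Fin k) :=
  Finset.univ.filter (fun p => p.1 < p.2)

/-- The `λ`-entry of the tree vector `v_λ(T)` at the pair `(i, j)`:
`(1 − λ) m_{i,j} + λ M_{i,j}`. -/
noncomputable def vPair (lam : ℝ) (T : RTree k) (i j : Fin k) : ℝ :=
  (1 - lam) * (T.m i j : ℝ) + lam * T.Mlen i j

/-- The `λ`-entry of the tree vector `v_λ(T)` at tip `i`: `(1 − λ) · 1 + λ p_i`. -/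
noncomputable def vTip (lam : ℝ) (T : RTree k) (i : Fin k) : ℝ :=
  (1 - lam) * 1 + lam * T.pend i

/-- The metric `d_λ(T_a, T_b) = ‖v_λ(T_a) − v_λ(T_b)‖₂`. -/
noncomputable def treeDist (lam : ℝ) (Ta Tb : RTree k) : ℝ :=
  Real.sqrt
    ((∑ p ∈ tipPairs k, (vPair lam Ta p.1 p.2 - vPair lam Tb p.1 p.2) ^ 2) +
      ∑ i : Fin k, (vTip lam Ta i - vTip lam Tb i) ^ 2)

/-- `‖m(T_a) − m(T_b)‖₂`, the Euclidean distance between the topology vectors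
(the final `k` entries of `m` are all `1` and contribute nothing). -/
noncomputable def mDist (Ta Tb : RTree k) : ℝ :=
  Real.sqrt (∑ p ∈ tipPairs k, ((Ta.m p.1 p.2 : ℝ) - (Tb.m p.1 p.2 : ℝ)) ^ 2)

/-- `‖M(T_a) − M(T_b)‖₂`, the Euclidean distance between the
branch-length vectors (root-to-MRCA path lengths and pendant lengths). -/
noncomputable def MDist (Ta Tb : RTree k) : ℝ :=
  Real.sqrt
    ((∑ p ∈ tipPairs k, (Ta.Mlen p.1 p.2 - Tb.Mlen p.1 p.2) ^ 2) +
      ∑ i : Fin k, (Ta.pend i - Tb.pend i) ^ 2)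

/-- `D_λ(T_a,T_b) = (1−λ)‖m(T_a)−m(T_b)‖₂ + λ‖M(T_a)−M(T_b)‖₂`. -/
noncomputable def DDist (lam : ℝ) (Ta Tb : RTree k) : ℝ :=
  (1 - lam) * mDist Ta Tb + lam * MDist Ta Tb

end RTree

namespace RTree

variable {k : ℕ}

@[simp]
lemma tips_leaf (i : Fin k) : (leaf i).tips = {i} := rfl

@[simp]
lemma tips_node (a b : ℝ) (l r : RTree k) : (node a l b r).tips = l.tips ∪ r.tips := by
  simp [tips, tipList]

lemma disjoint_tips_of_nodup_node {a b : ℝ} {l r : RTree k}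
    (h : (node a l b r).tipList.Nodup) :
    l.tipList.Nodup ∧ r.tipList.Nodup ∧ Disjoint l.tips r.tips := by
  rw [tipList, List.nodup_append] at h
  exact ⟨h.1, h.2.1, Finset.disjoint_left.2 fun {x} hl hr =>
    h.2.2 x (List.mem_toFinset.1 hl) x (List.mem_toFinset.1 hr) rfl⟩

lemma IsPhylo.tips_eq_univ {T : RTree k} (hT : T.IsPhylo) : T.tips = Finset.univ :=
  Finset.eq_univ_of_forall fun i => List.mem_toFinset.2 (hT.2 i)

lemma tips_nonempty : ∀ T : RTree k, T.tips.Nonempty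
  | leaf i => ⟨i, by simp⟩
  | node _ l _ r => by simpa using Or.inl (tips_nonempty l)

/-- The tips below the ancestor of tip `i` at depth `d`. -/
def ancestorClade (T : RTree k) (i : Fin k) (d : ℕ) : Finset (Fin k) :=
  T.tips.filter fun j => d ≤ T.m i j

@[simp]
lemma ancestorClade_zero (T : RTree k) (i : Fin k) : T.ancestorClade i 0 = T.tips := by
  simp [ancestorClade]

section node

variable {a b : ℝ} {l r : RTree k} {i : Fin k}

lemma m_node_of_mem_left (hi : i ∈ l.tips) (hd : Disjoint l.tips r.tips) (j : Fin k) :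
    (node a l b r).m i j = if j ∈ l.tips then l.m i j + 1 else 0 := by
  have hir : i ∉ r.tips := Finset.disjoint_left.1 hd hi
  by_cases hj : j ∈ l.tips <;> simp [m, hi, hj, hir]

lemma m_node_of_mem_right (hi : i ∈ r.tips) (hd : Disjoint l.tips r.tips) (j : Fin k) :
    (node a l b r).m i j = if j ∈ r.tips then r.m i j + 1 else 0 := by
  have hil : i ∉ l.tips := Finset.disjoint_right.1 hd hi
  by_cases hj : j ∈ r.tips <;> simp [m, hi, hj, hil]

lemma ancestorClade_node_succ_of_mem_left (hi : i ∈ l.tips) (hd : Disjoint l.tips r.tips)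
    (d : ℕ) : (node a l b r).ancestorClade i (d + 1) = l.ancestorClade i d := by
  ext j
  by_cases hj : j ∈ l.tips <;> simp [ancestorClade, m_node_of_mem_left hi hd, hj]

lemma ancestorClade_node_succ_of_mem_right (hi : i ∈ r.tips) (hd : Disjoint l.tips r.tips)
    (d : ℕ) : (node a l b r).ancestorClade i (d + 1) = r.ancestorClade i d := by
  ext j
  by_cases hj : j ∈ r.tips <;> simp [ancestorClade, m_node_of_mem_right hi hd, hj]

end node

theorem clades_eq_setOf_ancestorClade {T : RTree k} (hT : T.tipList.Nodup) :
    T.clades = {S | ∃ i ∈ T.tips, ∃ d ≤ T.m i i, S = T.ancestorClade i d} := by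
  induction T with
  | leaf i =>
    ext S
    simp [clades, m, ancestorClade, eq_comm]
  | node a l b r ihl ihr =>
    obtain ⟨hl, hr, hd⟩ := disjoint_tips_of_nodup_node hT
    ext S
    simp only [clades, Set.mem_insert_iff, Set.mem_union, ihl hl, ihr hr]
    constructor
    · rintro (rfl | ⟨i, hi, d, hdi, rfl⟩ | ⟨i, hi, d, hdi, rfl⟩)
      · obtain ⟨i, hi⟩ := (node a l b r).tips_nonempty
        exact ⟨i, hi, 0, Nat.zero_le _, (ancestorClade_zero _ _).symm⟩
      · refine ⟨i, by simp [hi], d + 1, ?_,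
          (ancestorClade_node_succ_of_mem_left hi hd d).symm⟩
        simpa [m_node_of_mem_left hi hd, hi] using hdi
      · refine ⟨i, by simp [hi], d + 1, ?_,
          (ancestorClade_node_succ_of_mem_right hi hd d).symm⟩
        simpa [m_node_of_mem_right hi hd, hi] using hdi
    · rintro ⟨i, hi, _ | d, hdi, rfl⟩
      · exact Or.inl (ancestorClade_zero _ _)
      rcases Finset.mem_union.1 (by simpa using hi) with hi | hi
      · refine Or.inr (Or.inl ⟨i, hi, d, ?_, ancestorClade_node_succ_of_mem_left hi hd d⟩)
        simpa [m_node_of_mem_left hi hd, hi] using hdi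
      · refine Or.inr (Or.inr ⟨i, hi, d, ?_, ancestorClade_node_succ_of_mem_right hi hd d⟩)
        simpa [m_node_of_mem_right hi hd, hi] using hdi

end RTree

open RTree in
/-- if all root-to-MRCA edge counts agree, the trees have the
same topology (same set of tip partitions induced by internal edges). -/
theorem same_m_implies_same_topology {k : ℕ} (Ta Tb : RTree k)
    (ha : Ta.IsPhylo) (hb : Tb.IsPhylo)
    (hm : ∀ i j : Fin k, Ta.m i j = Tb.m i j) :
    Ta.clades = Tb.clades := by
  rw [clades_eq_setOf_ancestorClade ha.1, clades_eq_setOf_ancestorClade hb.1]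
  simp only [ancestorClade, ha.tips_eq_univ, hb.tips_eq_univ, hm]
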